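/- G′(r) ≥ 0 for all r ∈ (0,R): the quotient G = g₂/g₁ of the radial parts of the second and first Dirichlet eigenfunctions of a geodesic ball in 𝕂ℍⁿ is monotone nondecreasing on (0,R). -/

import Mathlib

/-!
With the volume density `b = sinh ^ (kn-1) * cosh ^ (k-1)` (so that `b' = H b`), the weighted
Wronskian `W = b (g₁ g₂' - g₂ g₁')` satisfies `W' = (λ₁ - λ₂ + Λ) b g₁ g₂`, and `G' = W / (b g₁²)`.
The factor `λ₁ - λ₂ + Λ` is antitone, so it changes sign at most once, from `+` to `-`; hence
`W` first increases and then decreases. Since `W → 0` at both ends of `(0, R)`, `W ≥ 0`.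
-/

open Real Filter Set Topology

lemma hasDerivAt_sinh_rpow_mul_cosh_rpow (m j : ℝ) {r : ℝ} (hr : 0 < r) :
    HasDerivAt (fun x => sinh x ^ m * cosh x ^ j)
      ((m * (cosh r / sinh r) + j * tanh r) * (sinh r ^ m * cosh r ^ j)) r := by
  have hs : 0 < sinh r := sinh_pos_iff.mpr hr
  have hc : 0 < cosh r := cosh_pos r
  have hsm := (hasDerivAt_rpow_const (p := m) (Or.inl hs.ne')).comp r (hasDerivAt_sinh r)
  have hcj := (hasDerivAt_rpow_const (p := j) (Or.inl hc.ne')).comp r (hasDerivAt_cosh r)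
  refine (hsm.mul hcj).congr_deriv ?_
  rw [rpow_sub_one hs.ne', rpow_sub_one hc.ne', tanh_eq_sinh_div_cosh]
  simp only [Function.comp_apply]
  field_simp

lemma tendsto_sinh_rpow_mul_cosh_rpow_nhdsGT_zero {m : ℝ} (hm : 0 < m) (j : ℝ) :
    Tendsto (fun x => sinh x ^ m * cosh x ^ j) (𝓝[>] 0) (𝓝 0) := by
  have hcont : ContinuousAt (fun x => sinh x ^ m * cosh x ^ j) 0 :=
    ((continuousAt_rpow_const _ m (Or.inr hm.le)).comp continuous_sinh.continuousAt).mul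
      ((continuousAt_rpow_const _ j (Or.inl (cosh_pos 0).ne')).comp continuous_cosh.continuousAt)
  simpa [zero_rpow hm.ne'] using hcont.tendsto.mono_left nhdsWithin_le_nhds

lemma antitoneOn_div_sinh_sq_sub_div_cosh_sq {m j : ℝ} (hj : 0 ≤ j) (hjm : j ≤ m) :
    AntitoneOn (fun r => m / sinh r ^ 2 - j / cosh r ^ 2) (Ioi 0) := by
  -- `1 / sinh² - 1 / cosh² = 1 / (sinh cosh)²`
  have hsplit : ∀ r, 0 < r →
      m / sinh r ^ 2 - j / cosh r ^ 2 = (m - j) / sinh r ^ 2 + j / (sinh r * cosh r) ^ 2 := by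
    intro r hr
    have hs : sinh r ≠ 0 := (sinh_pos_iff.mpr hr).ne'
    have hc : cosh r ^ 2 = sinh r ^ 2 + 1 := cosh_sq r
    field_simp
    rw [hc]
    ring
  intro a ha c hc hac
  have hsa : 0 < sinh a := sinh_pos_iff.mpr ha
  have hs : sinh a ≤ sinh c := sinh_le_sinh.mpr hac
  have hcosh : cosh a ≤ cosh c := by
    rw [cosh_le_cosh, abs_of_pos ha, abs_of_pos (mem_Ioi.mp hc)]
    exact hac
  have hca : 0 < cosh a := cosh_pos a
  dsimp only
  rw [hsplit a ha, hsplit c hc]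
  have hmj : 0 ≤ m - j := sub_nonneg.mpr hjm
  gcongr
  exact hsa.le.trans hs

lemma HasDerivAt.weighted_wronskian {b g₁ g₁' g₂ g₂' : ℝ → ℝ} {h q₁ q₂ g₁'' g₂'' r : ℝ}
    (hb : HasDerivAt b (h * b r) r)
    (hg₁ : HasDerivAt g₁ (g₁' r) r) (hg₁' : HasDerivAt g₁' g₁'' r)
    (hg₂ : HasDerivAt g₂ (g₂' r) r) (hg₂' : HasDerivAt g₂' g₂'' r)
    (ode₁ : g₁'' + h * g₁' r + q₁ * g₁ r = 0) (ode₂ : g₂'' + h * g₂' r + q₂ * g₂ r = 0) :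
    HasDerivAt (fun x => b x * (g₁ x * g₂' x - g₂ x * g₁' x))
      ((q₁ - q₂) * (b r * (g₁ r * g₂ r))) r := by
  refine (hb.mul ((hg₁.mul hg₂').sub (hg₂.mul hg₁'))).congr_deriv ?_
  simp only [Pi.mul_apply, Pi.sub_apply]
  linear_combination b r * (g₁ r * ode₂ - g₂ r * ode₁)

lemma tendsto_wronskian_nhdsGT_zero {g₁ g₁' g₂ g₂' : ℝ → ℝ}
    (hg₁ : Tendsto g₁ (𝓝[>] 0) (𝓝 1)) (hg₁' : Tendsto g₁' (𝓝[>] 0) (𝓝 0))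
    (hg₂ : Tendsto (fun r => g₂ r / r) (𝓝[>] 0) (𝓝 1)) (hg₂' : Tendsto g₂' (𝓝[>] 0) (𝓝 1)) :
    Tendsto (fun r => g₁ r * g₂' r - g₂ r * g₁' r) (𝓝[>] 0) (𝓝 1) := by
  have hg₂0 : Tendsto g₂ (𝓝[>] 0) (𝓝 0) := by
    have h := hg₂.mul (tendsto_id.mono_left (nhdsWithin_le_nhds (s := Ioi (0 : ℝ))))
    rw [mul_zero] at h
    refine h.congr' ?_
    filter_upwards [self_mem_nhdsWithin] with r hr
    exact div_mul_cancel₀ _ (ne_of_gt hr)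
  simpa using (hg₁.mul hg₂').sub (hg₂0.mul hg₁')

lemma nonneg_of_tendsto_nhdsGT_of_deriv_nonneg {W W' : ℝ → ℝ} {a x : ℝ} (hax : a < x)
    (hW : ∀ y ∈ Ioc a x, HasDerivAt W (W' y) y) (hW' : ∀ y ∈ Ioo a x, 0 ≤ W' y)
    (ha : Tendsto W (𝓝[>] a) (𝓝 0)) : 0 ≤ W x := by
  have hmono : MonotoneOn W (Ioc a x) := by
    refine monotoneOn_of_hasDerivWithinAt_nonneg (convex_Ioc a x)
      (fun y hy => (hW y hy).continuousAt.continuousWithinAt) ?_ (by rwa [interior_Ioc])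
    rw [interior_Ioc]
    exact fun y hy => (hW y (Ioo_subset_Ioc_self hy)).hasDerivWithinAt
  refine le_of_tendsto ha ?_
  filter_upwards [Ioo_mem_nhdsGT hax] with y hy
  exact hmono ⟨hy.1, hy.2.le⟩ ⟨hax, le_rfl⟩ hy.2.le

lemma nonneg_of_tendsto_nhdsLT_of_deriv_nonpos {W W' : ℝ → ℝ} {x c : ℝ} (hxc : x < c)
    (hW : ∀ y ∈ Ico x c, HasDerivAt W (W' y) y) (hW' : ∀ y ∈ Ioo x c, W' y ≤ 0)
    (hc : Tendsto W (𝓝[<] c) (𝓝 0)) : 0 ≤ W x := by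
  have hanti : AntitoneOn W (Ico x c) := by
    refine antitoneOn_of_hasDerivWithinAt_nonpos (convex_Ico x c)
      (fun y hy => (hW y hy).continuousAt.continuousWithinAt) ?_ (by rwa [interior_Ico])
    rw [interior_Ico]
    exact fun y hy => (hW y (Ioo_subset_Ico_self hy)).hasDerivWithinAt
  refine le_of_tendsto hc ?_
  filter_upwards [Ioo_mem_nhdsLT hxc] with y hy
  exact hanti ⟨le_rfl, hxc⟩ ⟨hy.1.le, hy.2⟩ hy.1.le

lemma nonneg_of_hasDerivAt_antitone_mul {W f p : ℝ → ℝ} {a c : ℝ}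
    (hW : ∀ x ∈ Ioo a c, HasDerivAt W (f x * p x) x) (hf : AntitoneOn f (Ioo a c))
    (hp : ∀ x ∈ Ioo a c, 0 ≤ p x)
    (ha : Tendsto W (𝓝[>] a) (𝓝 0)) (hc : Tendsto W (𝓝[<] c) (𝓝 0)) :
    ∀ x ∈ Ioo a c, 0 ≤ W x := by
  intro x hx
  rcases le_or_gt 0 (f x) with hfx | hfx
  · refine nonneg_of_tendsto_nhdsGT_of_deriv_nonneg hx.1
      (fun y hy => hW y ⟨hy.1, hy.2.trans_lt hx.2⟩) (fun y hy => ?_) ha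
    have hy' : y ∈ Ioo a c := ⟨hy.1, hy.2.trans hx.2⟩
    exact mul_nonneg (hfx.trans (hf hy' hx hy.2.le)) (hp y hy')
  · refine nonneg_of_tendsto_nhdsLT_of_deriv_nonpos hx.2
      (fun y hy => hW y ⟨hx.1.trans_le hy.1, hy.2⟩) (fun y hy => ?_) hc
    have hy' : y ∈ Ioo a c := ⟨hx.1.trans hy.1, hy.2⟩
    exact mul_nonpos_of_nonpos_of_nonneg ((hf hx hy' hy.1.le).trans hfx.le) (hp y hy')

theorem stmt_7_general
    (k n : ℕ) (hk : k = 2 ∨ k = 4 ∨ k = 8) (hn : 2 ≤ n)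
    (H : ℝ → ℝ)
    (hH : ∀ r : ℝ, 0 < r →
      H r = ((k : ℝ) * n - 1) * (Real.cosh r / Real.sinh r) + ((k : ℝ) - 1) * Real.tanh r)
    (R lam1 : ℝ) (hR : 0 < R)
    (g₁ g₁' g₁'' : ℝ → ℝ)
    (hg₁d : ∀ r : ℝ, 0 < r → HasDerivAt g₁ (g₁' r) r)
    (hg₁d' : ∀ r : ℝ, 0 < r → HasDerivAt g₁' (g₁'' r) r)
    (hg₁ode : ∀ r : ℝ, 0 < r → g₁'' r + H r * g₁' r + lam1 * g₁ r = 0)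
    (hg₁pos : ∀ r ∈ Set.Ioo (0 : ℝ) R, 0 < g₁ r)
    (hg₁R : g₁ R = 0)
    (hg₁lim : Filter.Tendsto g₁ (nhdsWithin 0 (Set.Ioi 0)) (nhds 1))
    (hg₁'lim : Filter.Tendsto g₁' (nhdsWithin 0 (Set.Ioi 0)) (nhds 0))
    (Λ : ℝ → ℝ)
    (hΛ : ∀ r : ℝ, 0 < r →
      Λ r = ((k : ℝ) * n - 1) / Real.sinh r ^ 2 - ((k : ℝ) - 1) / Real.cosh r ^ 2)
    (lam2 : ℝ)
    (g₂ g₂' g₂'' : ℝ → ℝ)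
    (hg₂d : ∀ r : ℝ, 0 < r → HasDerivAt g₂ (g₂' r) r)
    (hg₂d' : ∀ r : ℝ, 0 < r → HasDerivAt g₂' (g₂'' r) r)
    (hg₂ode : ∀ r : ℝ, 0 < r → g₂'' r + H r * g₂' r + (lam2 - Λ r) * g₂ r = 0)
    (hg₂pos : ∀ r ∈ Set.Ioo (0 : ℝ) R, 0 < g₂ r)
    (hg₂R : g₂ R = 0)
    (hg₂lim : Filter.Tendsto (fun r => g₂ r / r) (nhdsWithin 0 (Set.Ioi 0)) (nhds 1))
    (hg₂'lim : Filter.Tendsto g₂' (nhdsWithin 0 (Set.Ioi 0)) (nhds 1)) :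
    ∀ r ∈ Set.Ioo (0 : ℝ) R, 0 ≤ deriv (fun s => g₂ s / g₁ s) r := by
  have hk1 : (1 : ℝ) ≤ k := by rcases hk with rfl | rfl | rfl <;> norm_num
  have hn2 : (2 : ℝ) ≤ n := by exact_mod_cast hn
  have hjm : (k : ℝ) - 1 ≤ k * n - 1 := by nlinarith
  set b : ℝ → ℝ := fun x => sinh x ^ ((k : ℝ) * n - 1) * cosh x ^ ((k : ℝ) - 1)
  set W : ℝ → ℝ := fun x => b x * (g₁ x * g₂' x - g₂ x * g₁' x)
  have hb_pos : ∀ x, 0 < x → 0 < b x := fun x hx =>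
    mul_pos (rpow_pos_of_pos (sinh_pos_iff.mpr hx) _) (rpow_pos_of_pos (cosh_pos x) _)
  have hW : ∀ x ∈ Ioi (0 : ℝ),
      HasDerivAt W ((lam1 - (lam2 - Λ x)) * (b x * (g₁ x * g₂ x))) x := by
    intro x hx
    have hb : HasDerivAt b (H x * b x) x := by
      rw [hH x hx]
      exact hasDerivAt_sinh_rpow_mul_cosh_rpow _ _ hx
    exact hb.weighted_wronskian (hg₁d x hx) (hg₁d' x hx) (hg₂d x hx) (hg₂d' x hx)
      (hg₁ode x hx) (hg₂ode x hx)
  have hΛ_anti : AntitoneOn (fun x => lam1 - (lam2 - Λ x)) (Ioo 0 R) := by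
    intro a ha c hc hac
    have hΛac := antitoneOn_div_sinh_sq_sub_div_cosh_sq (by linarith) hjm ha.1 hc.1 hac
    simp only [hΛ a ha.1, hΛ c hc.1] at hΛac ⊢
    linarith
  have hW0 : Tendsto W (𝓝[>] 0) (𝓝 0) := by
    simpa using (tendsto_sinh_rpow_mul_cosh_rpow_nhdsGT_zero (m := (k : ℝ) * n - 1)
      (by nlinarith) ((k : ℝ) - 1)).mul
      (tendsto_wronskian_nhdsGT_zero hg₁lim hg₁'lim hg₂lim hg₂'lim)
  have hWR : Tendsto W (𝓝[<] R) (𝓝 0) := by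
    simpa [W, hg₁R, hg₂R] using (hW R hR).continuousAt.tendsto.mono_left nhdsWithin_le_nhds
  intro r hr
  have hWr := nonneg_of_hasDerivAt_antitone_mul (fun x hx => hW x hx.1) hΛ_anti
    (fun x hx => (mul_pos (hb_pos x hx.1) (mul_pos (hg₁pos x hx) (hg₂pos x hx))).le) hW0 hWR r hr
  have hP := nonneg_of_mul_nonneg_right hWr (hb_pos r hr.1)
  rw [((hg₂d r hr.1).fun_div (hg₁d r hr.1) (hg₁pos r hr).ne').deriv]
  exact div_nonneg (by linarith) (sq_nonneg _)

/-- The quotient G = g₂/g₁ of the radial parts of the second and first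
Dirichlet eigenfunctions of a geodesic ball in 𝕂ℍⁿ is monotone nondecreasing on
(0,R): G′(r) ≥ 0 for all r ∈ (0,R). -/
theorem stmt_7
    (k n : ℕ) (hk : k = 2 ∨ k = 4 ∨ k = 8) (hn : 2 ≤ n) (hk8 : k = 8 → n = 2)
    (H : ℝ → ℝ)
    (hH : ∀ r : ℝ, 0 < r →
      H r = ((k : ℝ) * n - 1) * (Real.cosh r / Real.sinh r) + ((k : ℝ) - 1) * Real.tanh r)
    (R lam1 : ℝ) (hR : 0 < R) (hlam1 : 0 < lam1)
    (g₁ g₁' g₁'' : ℝ → ℝ)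
    (hg₁d : ∀ r : ℝ, 0 < r → HasDerivAt g₁ (g₁' r) r)
    (hg₁d' : ∀ r : ℝ, 0 < r → HasDerivAt g₁' (g₁'' r) r)
    (hg₁c : ContinuousOn g₁'' (Set.Ioi 0))
    (hg₁ode : ∀ r : ℝ, 0 < r → g₁'' r + H r * g₁' r + lam1 * g₁ r = 0)
    (hg₁pos : ∀ r ∈ Set.Ioo (0 : ℝ) R, 0 < g₁ r)
    (hg₁R : g₁ R = 0)
    (hg₁lim : Filter.Tendsto g₁ (nhdsWithin 0 (Set.Ioi 0)) (nhds 1))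
    (hg₁'lim : Filter.Tendsto g₁' (nhdsWithin 0 (Set.Ioi 0)) (nhds 0))
    (Λ : ℝ → ℝ)
    (hΛ : ∀ r : ℝ, 0 < r →
      Λ r = ((k : ℝ) * n - 1) / Real.sinh r ^ 2 - ((k : ℝ) - 1) / Real.cosh r ^ 2)
    (lam2 : ℝ)
    (g₂ g₂' g₂'' : ℝ → ℝ)
    (hg₂d : ∀ r : ℝ, 0 < r → HasDerivAt g₂ (g₂' r) r)
    (hg₂d' : ∀ r : ℝ, 0 < r → HasDerivAt g₂' (g₂'' r) r)
    (hg₂c : ContinuousOn g₂'' (Set.Ioi 0))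
    (hg₂ode : ∀ r : ℝ, 0 < r → g₂'' r + H r * g₂' r + (lam2 - Λ r) * g₂ r = 0)
    (hg₂pos : ∀ r ∈ Set.Ioo (0 : ℝ) R, 0 < g₂ r)
    (hg₂R : g₂ R = 0)
    (hg₂lim : Filter.Tendsto (fun r => g₂ r / r) (nhdsWithin 0 (Set.Ioi 0)) (nhds 1))
    (hg₂'lim : Filter.Tendsto g₂' (nhdsWithin 0 (Set.Ioi 0)) (nhds 1))
    (hubar1 : ∃ v : ℝ → ℝ, ContDiffOn ℝ 1 v (Set.Icc 0 R) ∧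
      (∀ r ∈ Set.Ioo (0 : ℝ) R,
        v r = Real.sinh r ^ (((k : ℝ) * n - 1) / 2) * Real.cosh r ^ (((k : ℝ) - 1) / 2) * g₁ r) ∧
      v 0 = 0 ∧ v R = 0)
    (hubar2 : ∃ v : ℝ → ℝ, ContDiffOn ℝ 1 v (Set.Icc 0 R) ∧
      (∀ r ∈ Set.Ioo (0 : ℝ) R,
        v r = Real.sinh r ^ (((k : ℝ) * n - 1) / 2) * Real.cosh r ^ (((k : ℝ) - 1) / 2) * g₂ r) ∧
      v 0 = 0 ∧ v R = 0) :
    ∀ r ∈ Set.Ioo (0 : ℝ) R, 0 ≤ deriv (fun s => g₂ s / g₁ s) r :=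
  stmt_7_general k n hk hn H hH R lam1 hR g₁ g₁' g₁'' hg₁d hg₁d' hg₁ode hg₁pos hg₁R hg₁lim hg₁'lim Λ
    hΛ lam2 g₂ g₂' g₂'' hg₂d hg₂d' hg₂ode hg₂pos hg₂R hg₂lim hg₂'lim
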